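/- arXiv:1808.00085 — 2 statements merged into one kernel-verified Lean document; each statement's English description precedes it below -/
import Mathlib

section
/- Let ν ≤ 2 and let ω ∈ C²(ℝ^ν, ℝ) have a global minimum m at x_0, so 0 ≤ ω(k) - m ≤ C|k - x_0|² on a ball B_r(x_0) for some C, r > 0. If |v| ≥ δ > 0 on B_r(x_0), then ∫_{ℝ^ν} |v(k)|² / (ω(k) - m) dk = ∞. -/
/-!
Near the minimum the denominator is at most `C ‖k - x₀‖²` and the numerator at least `δ²`, so
the integrand dominates `(δ² / C) ‖k - x₀‖⁻²` on the ball. In polar coordinates the integral of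
`‖x‖ ^ (-p)` over a ball in dimension `d` is that of `t ^ (d - 1 - p)` over `(0, r)`, which
diverges as soon as `d ≤ p`.
-/

open MeasureTheory Metric Set
open scoped ENNReal

section

variable {E : Type*} [NormedAddCommGroup E] [NormedSpace ℝ E] [FiniteDimensional ℝ E]
  [MeasurableSpace E] [BorelSpace E] [Nontrivial E] (μ : Measure E) [μ.IsAddHaarMeasure]

theorem not_integrableOn_ball_norm_rpow_neg {p r : ℝ} (hp : Module.finrank ℝ E ≤ p)
    (hr : 0 < r) : ¬ IntegrableOn (fun x : E => ‖x‖ ^ (-p)) (ball 0 r) μ := by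
  rw [integrableOn_fun_norm_addHaar μ (f := fun y => y ^ (-p))]
  intro h
  have hpow : IntegrableOn (fun y : ℝ => y ^ ((Module.finrank ℝ E : ℝ) - 1 - p)) (Ioo 0 r) := by
    refine h.congr_fun (fun y hy => ?_) measurableSet_Ioo
    dsimp only
    rw [smul_eq_mul, ← Real.rpow_natCast, ← Real.rpow_add hy.1,
      Nat.cast_sub Module.finrank_pos, Nat.cast_one, sub_eq_add_neg _ p]
  rw [intervalIntegral.integrableOn_Ioo_rpow_iff hr] at hpow
  linarith

theorem setLIntegral_ball_norm_sub_rpow_neg_eq_top {p r : ℝ} (hp : Module.finrank ℝ E ≤ p)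
    (hr : 0 < r) (x₀ : E) :
    ∫⁻ x in ball x₀ r, ENNReal.ofReal (‖x - x₀‖ ^ (-p)) ∂μ = ∞ := by
  have hpre : (· - x₀) ⁻¹' ball (0 : E) r = ball x₀ r := by
    ext x
    simp [dist_eq_norm]
  rw [← hpre, (measurePreserving_sub_right μ x₀).setLIntegral_comp_preimage measurableSet_ball
    (f := fun y => ENNReal.ofReal (‖y‖ ^ (-p))) (by fun_prop), ← not_ne_iff,
    lintegral_ofReal_ne_top_iff_integrable (measurable_norm.pow_const _).aestronglyMeasurable
      (.of_forall fun x => by positivity)]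
  exact not_integrableOn_ball_norm_rpow_neg μ hp hr

end

theorem ENNReal.ofReal_div_mul_rpow_neg_two_le {a b c t : ℝ} (ha : 0 ≤ a) (hc : 0 < c)
    (ht : 0 ≤ t) (hb : b ≤ c * t ^ 2) :
    ENNReal.ofReal (a / c) * ENNReal.ofReal (t ^ (-2 : ℝ)) ≤
      ENNReal.ofReal a / ENNReal.ofReal b := by
  rcases ht.eq_or_lt with rfl | ht
  · simp
  calc ENNReal.ofReal (a / c) * ENNReal.ofReal (t ^ (-2 : ℝ))
      = ENNReal.ofReal a / ENNReal.ofReal (c * t ^ 2) := by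
        rw [← ENNReal.ofReal_mul (by positivity), ← ENNReal.ofReal_div_of_pos (by positivity),
          Real.rpow_neg ht.le, Real.rpow_two]
        congr 1
        ring
    _ ≤ ENNReal.ofReal a / ENNReal.ofReal b := by gcongr

theorem stmt6_general
    (ν : ℕ) (hν1 : 1 ≤ ν) (hν2 : ν ≤ 2)
    (ω : EuclideanSpace ℝ (Fin ν) → ℝ)
    (v : EuclideanSpace ℝ (Fin ν) → ℂ)
    (m : ℝ) (x0 : EuclideanSpace ℝ (Fin ν))
    (C r δ : ℝ) (hC : 0 < C) (hr : 0 < r) (hδ : 0 < δ)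
    (hquad : ∀ k ∈ Metric.ball x0 r, ω k - m ≤ C * ‖k - x0‖ ^ 2)
    (hlow : ∀ k ∈ Metric.ball x0 r, δ ≤ ‖v k‖) :
    ∫⁻ k, ENNReal.ofReal (‖v k‖ ^ 2) / ENNReal.ofReal (ω k - m) ∂volume = ⊤ := by
  have : Nontrivial (EuclideanSpace ℝ (Fin ν)) := by
    rw [← Module.finrank_pos_iff (R := ℝ), finrank_euclideanSpace_fin]
    exact hν1
  have hdim : (Module.finrank ℝ (EuclideanSpace ℝ (Fin ν)) : ℝ) ≤ 2 := by
    rw [finrank_euclideanSpace_fin]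
    exact_mod_cast hν2
  have hdom : ∀ k ∈ ball x0 r, ENNReal.ofReal (δ ^ 2 / C) * ENNReal.ofReal (‖k - x0‖ ^ (-2 : ℝ))
      ≤ ENNReal.ofReal (‖v k‖ ^ 2) / ENNReal.ofReal (ω k - m) := fun k hk =>
    (ENNReal.ofReal_div_mul_rpow_neg_two_le (by positivity) hC (norm_nonneg _) (hquad k hk)).trans
      (by gcongr; exact hlow k hk)
  refine eq_top_iff.2 ?_
  calc ⊤ = ENNReal.ofReal (δ ^ 2 / C) *
        ∫⁻ k in ball x0 r, ENNReal.ofReal (‖k - x0‖ ^ (-2 : ℝ)) := by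
        rw [setLIntegral_ball_norm_sub_rpow_neg_eq_top volume hdim hr, ENNReal.mul_top]
        positivity
    _ = ∫⁻ k in ball x0 r, ENNReal.ofReal (δ ^ 2 / C) * ENNReal.ofReal (‖k - x0‖ ^ (-2 : ℝ)) :=
        (lintegral_const_mul' _ _ ENNReal.ofReal_ne_top).symm
    _ ≤ ∫⁻ k in ball x0 r, ENNReal.ofReal (‖v k‖ ^ 2) / ENNReal.ofReal (ω k - m) :=
        setLIntegral_mono' measurableSet_ball hdom
    _ ≤ _ := setLIntegral_le_lintegral _ _

/-- In dimension `ν ≤ 2`, if `ω ∈ C²` attains its global minimum `m` at `x₀`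
(so that `0 ≤ ω(k) - m ≤ C‖k - x₀‖²` on a ball `B_r(x₀)`) and `|v| ≥ δ > 0` on that ball,
then `∫ |v(k)|²/(ω(k) - m) dk = ∞`. -/
theorem stmt6
    (ν : ℕ) (hν1 : 1 ≤ ν) (hν2 : ν ≤ 2)
    (ω : EuclideanSpace ℝ (Fin ν) → ℝ) (hω : ContDiff ℝ 2 ω)
    (v : EuclideanSpace ℝ (Fin ν) → ℂ) (hv : Measurable v)
    (m : ℝ) (x0 : EuclideanSpace ℝ (Fin ν)) (hmin : ∀ k, m ≤ ω k) (hm : ω x0 = m)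
    (C r δ : ℝ) (hC : 0 < C) (hr : 0 < r) (hδ : 0 < δ)
    (hquad : ∀ k ∈ Metric.ball x0 r, ω k - m ≤ C * ‖k - x0‖ ^ 2)
    (hlow : ∀ k ∈ Metric.ball x0 r, δ ≤ ‖v k‖) :
    ∫⁻ k, ENNReal.ofReal (‖v k‖ ^ 2) / ENNReal.ofReal (ω k - m) ∂volume = ⊤ :=
  stmt6_general ν hν1 hν2 ω v m x0 C r δ hC hr hδ hquad hlow
end

section
/- Let A be self-adjoint with compact resolvent, bounded below, and let {W_g} be unitary self-adjoint operators converging weakly to 0 as g → ∞. Then for any η ∈ ℝ, the operators A + η W_g converge to A in norm resolvent sense: ‖(A + ηW_g - i)^{-1} - (A - i)^{-1}‖ → 0. -/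
/-!
Write `R = (A - i)⁻¹` and `R_g = (A + ηW_g - i)⁻¹`. Substituting the second resolvent identity
`R_g - R = -η R_g W_g R` into itself gives `R_g - R = η² R_g W_g (R W_g R) - η R W_g R`, so
`‖R_g - R‖ ≤ |η| (|η| + 1) ‖R W_g R‖`. Since `W_g ⇀ 0` and `R` is compact, `R W_g u → 0` in norm
for each `u`; these equibounded operators then converge to `0` uniformly on the precompact set
`R(ball 0 1)`, that is, `‖R W_g R‖ → 0`.
-/

open Filter Topology

section UniformOnCompact

variable {𝕜 E F G ι : Type*} [DenselyNormedField 𝕜] [NormedAddCommGroup E] [NormedSpace 𝕜 E]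
  [NormedAddCommGroup F] [NormedSpace 𝕜 F] [NormedAddCommGroup G] [NormedSpace 𝕜 G]
  {l : Filter ι}

theorem ContinuousLinearMap.tendstoUniformlyOn_of_tendsto_apply {T : ι → E →L[𝕜] F}
    (hT : ∃ C, ∀ i, ‖T i‖ ≤ C) (h : ∀ x, Tendsto (fun i ↦ T i x) l (𝓝 0))
    {S : Set E} (hS : IsCompact S) : TendstoUniformlyOn (fun i x ↦ T i x) 0 l S := by
  have hT : Equicontinuous ((↑) ∘ T) := ((NormedSpace.equicontinuous_TFAE T).out 5 1).mp hT
  have := (EquicontinuousOn.tendsto_uniformOnFun_iff_pi' (𝔖 := {S}) (by simpa)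
    (fun K _ ↦ hT.equicontinuousOn K) l 0).mpr (tendsto_pi_nhds.mpr fun x ↦ h x)
  exact UniformOnFun.tendsto_iff_tendstoUniformlyOn.mp this S rfl

theorem IsCompactOperator.tendsto_comp_of_tendsto_apply {K : E →L[𝕜] F}
    (hK : IsCompactOperator K) {T : ι → F →L[𝕜] G} (hT : ∃ C, ∀ i, ‖T i‖ ≤ C)
    (h : ∀ y, Tendsto (fun i ↦ T i y) l (𝓝 0)) :
    Tendsto (fun i ↦ (T i).comp K) l (𝓝 0) := by
  have hS := hK.isCompact_closure_image_of_bounded (Metric.isBounded_ball (x := (0 : E)) (r := 1))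
  have hunif := Metric.tendstoUniformlyOn_iff.mp
    (ContinuousLinearMap.tendstoUniformlyOn_of_tendsto_apply hT h hS)
  refine Metric.tendsto_nhds.mpr fun ε hε ↦ ?_
  filter_upwards [hunif (ε / 2) (half_pos hε)] with i hi
  have hnorm : ‖(T i).comp K‖ ≤ ε / 2 := by
    rw [← ((T i).comp K).sSup_unit_ball_eq_norm]
    refine csSup_le ((Metric.nonempty_ball.mpr one_pos).image _) ?_
    rintro - ⟨x, hx, rfl⟩
    simpa using (hi (K x) (subset_closure ⟨x, hx, rfl⟩)).le
  rw [dist_zero_right]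
  linarith

end UniformOnCompact

section InnerProductSpace

variable {𝕜 E F ι : Type*} [RCLike 𝕜] [NormedAddCommGroup E] [InnerProductSpace 𝕜 E]
  [CompleteSpace E] [NormedAddCommGroup F] [InnerProductSpace 𝕜 F] [CompleteSpace F]
  {l : Filter ι}

theorem IsCompactOperator.tendsto_apply_of_weakly_tendsto_zero {R : E →L[𝕜] F}
    (hR : IsCompactOperator R) {x : ι → E} (hx : ∃ M, ∀ i, ‖x i‖ ≤ M)
    (hweak : ∀ y, Tendsto (fun i ↦ inner 𝕜 y (x i)) l (𝓝 0)) :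
    Tendsto (fun i ↦ R (x i)) l (𝓝 0) := by
  obtain ⟨M, hM⟩ := hx
  have hS := hR.isCompact_closure_image_of_bounded
    (Metric.isBounded_closedBall (x := (0 : E)) (r := M))
  have hmem : ∀ i, R (x i) ∈ closure (R '' Metric.closedBall 0 M) := fun i ↦
    subset_closure ⟨x i, mem_closedBall_zero_iff.mpr (hM i), rfl⟩
  -- `‖R xᵢ‖² = ⟪R xᵢ, R xᵢ⟫`, and the functionals `⟪R xᵢ, ·⟫` tend to `0` uniformly on the
  -- compact set containing every `R xᵢ`.
  have hT : ∃ C, ∀ i, ‖innerSL 𝕜 (R (x i))‖ ≤ C := ⟨‖R‖ * M, fun i ↦ by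
    rw [innerSL_apply_norm]
    exact R.le_of_opNorm_le le_rfl _ |>.trans (by gcongr; exact hM i)⟩
  have hpt : ∀ w, Tendsto (fun i ↦ innerSL 𝕜 (R (x i)) w) l (𝓝 0) := fun w ↦ by
    rw [tendsto_zero_iff_norm_tendsto_zero]
    simpa [norm_inner_symm (R _), ← ContinuousLinearMap.adjoint_inner_left] using
      (hweak (ContinuousLinearMap.adjoint R w)).norm
  have hunif := Metric.tendstoUniformlyOn_iff.mp
    (ContinuousLinearMap.tendstoUniformlyOn_of_tendsto_apply hT hpt hS)
  refine Metric.tendsto_nhds.mpr fun ε hε ↦ ?_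
  filter_upwards [hunif (ε ^ 2) (by positivity)] with i hi
  have hsq : ‖R (x i)‖ ^ 2 < ε ^ 2 := by
    simpa [inner_self_eq_norm_sq_to_K] using hi _ (hmem i)
  rw [dist_zero_right]
  exact lt_of_pow_lt_pow_left₀ 2 hε.le hsq

end InnerProductSpace

theorem norm_sub_le_of_second_resolvent_identity {𝕜 A : Type*} [NormedField 𝕜] [NormedRing A]
    [NormedAlgebra 𝕜 A] {r r' w : A} {c : 𝕜} (h : r' - r = -c • (r' * w * r))
    (hr' : ‖r'‖ ≤ 1) (hw : ‖w‖ ≤ 1) : ‖r' - r‖ ≤ ‖c‖ * (‖c‖ + 1) * ‖r * w * r‖ := by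
  have hexpand : r' - r = c ^ 2 • ((r' * w) * (r * w * r)) - c • (r * w * r) :=
    calc r' - r = -c • (r' * w * r) := h
      _ = -c • (r * w * r + (r' - r) * w * r) := by noncomm_ring
      _ = -c • (r * w * r + (-c • (r' * w * r)) * w * r) := by rw [h]
      _ = c ^ 2 • ((r' * w) * (r * w * r)) - c • (r * w * r) := by
        simp only [smul_add, smul_mul_assoc, smul_smul, mul_assoc]; module
  have hr'w : ‖r' * w‖ ≤ 1 := (norm_mul_le _ _).trans (mul_le_one₀ hr' (norm_nonneg _) hw)
  calc ‖r' - r‖ ≤ ‖c‖ ^ 2 * ‖(r' * w) * (r * w * r)‖ + ‖c‖ * ‖r * w * r‖ := by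
        rw [hexpand, ← norm_pow, ← norm_smul, ← norm_smul]
        exact norm_sub_le _ _
    _ ≤ ‖c‖ ^ 2 * (1 * ‖r * w * r‖) + ‖c‖ * ‖r * w * r‖ := by
        gcongr
        exact (norm_mul_le _ _).trans (by gcongr)
    _ = ‖c‖ * (‖c‖ + 1) * ‖r * w * r‖ := by ring

theorem stmt15_general
    {H : Type*} [NormedAddCommGroup H] [InnerProductSpace ℂ H] [CompleteSpace H]
    (η : ℝ)
    (W : ℝ → (H →L[ℂ] H)) (hWu : ∀ g, W g ∈ unitary (H →L[ℂ] H))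
    (hweak : ∀ x y : H,
      Filter.Tendsto (fun g => (inner ℂ x ((W g) y) : ℂ)) Filter.atTop (nhds 0))
    (R : H →L[ℂ] H) (hR : IsCompactOperator R)
    (Rg : ℝ → (H →L[ℂ] H)) (hRgnorm : ∀ g, ‖Rg g‖ ≤ 1)
    (hres : ∀ g, Rg g - R = -(η : ℂ) • (Rg g * W g * R)) :
    Filter.Tendsto (fun g => ‖Rg g - R‖) Filter.atTop (nhds 0) := by
  have hWnorm : ∀ g, ‖W g‖ ≤ 1 := fun g ↦ (W g).opNorm_le_bound zero_le_one fun x ↦ by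
    rw [ContinuousLinearMap.norm_map_of_mem_unitary (hWu g), one_mul]
  have hRWR : Tendsto (fun g ↦ R * W g * R) atTop (𝓝 0) := by
    refine hR.tendsto_comp_of_tendsto_apply ⟨‖R‖, fun g ↦ ?_⟩ fun u ↦ ?_
    · exact (norm_mul_le _ _).trans (mul_le_of_le_one_right (norm_nonneg _) (hWnorm g))
    · refine hR.tendsto_apply_of_weakly_tendsto_zero ⟨‖u‖, fun g ↦ ?_⟩ fun y ↦ hweak y u
      exact (ContinuousLinearMap.norm_map_of_mem_unitary (hWu g) u).le
  refine squeeze_zero (fun g ↦ norm_nonneg _)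
    (fun g ↦ norm_sub_le_of_second_resolvent_identity (hres g) (hRgnorm g) (hWnorm g)) ?_
  simpa using hRWR.norm.const_mul (‖(η : ℂ)‖ * (‖(η : ℂ)‖ + 1))

/-- Norm resolvent convergence `A + ηW_g → A` for `A` self-adjoint with
compact resolvent and unitary self-adjoint `W_g ⇀ 0`.  The (possibly unbounded)
operator `A` is represented by its resolvent `R = (A - i)⁻¹`, assumed compact, and
`Rg g = (A + ηW_g - i)⁻¹`, related by the second resolvent identity and with the
standard bound `‖Rg g‖ ≤ 1`.  Conclusion: `‖Rg g - R‖ → 0`. -/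
theorem stmt15
    {H : Type*} [NormedAddCommGroup H] [InnerProductSpace ℂ H] [CompleteSpace H]
    (η : ℝ)
    (W : ℝ → (H →L[ℂ] H)) (hWu : ∀ g, W g ∈ unitary (H →L[ℂ] H))
    (hWsa : ∀ g, IsSelfAdjoint (W g))
    (hweak : ∀ x y : H,
      Filter.Tendsto (fun g => (inner ℂ x ((W g) y) : ℂ)) Filter.atTop (nhds 0))
    (R : H →L[ℂ] H) (hR : IsCompactOperator R) (hRnorm : ‖R‖ ≤ 1)
    (Rg : ℝ → (H →L[ℂ] H)) (hRgnorm : ∀ g, ‖Rg g‖ ≤ 1)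
    (hres : ∀ g, Rg g - R = -(η : ℂ) • (Rg g * W g * R)) :
    Filter.Tendsto (fun g => ‖Rg g - R‖) Filter.atTop (nhds 0) :=
  stmt15_general η W hWu hweak R hR Rg hRgnorm hres
end
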